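/- arXiv:2207.07108 — 9 statements merged into one kernel-verified Lean document; each statement's English description precedes it below -/
import Mathlib

section
/- Let p be a prime and let 𝔟 be an ideal in a commutative ring B. Then the following are equivalent: (1) for all n ≥ 1 and all a ∈ 𝔟, a^n ∈ p^{v_p(n!)}·𝔟; (2) for all a ∈ 𝔟, a^p ∈ p·𝔟. Here v_p denotes the p-adic valuation. -/
/-!
Write `n = p * q + r` with `r < p`. Legendre's formula gives `v_p(n!) = v_p(q!) + q`, and
`a ^ n = (a ^ p) ^ q * a ^ r = p ^ q * b ^ q * a ^ r` with `b ∈ I`, so strong induction on `n`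
(applied to `b` and `q`) proves (2) ⇒ (1). Conversely (1) at `n = p` is (2), as `v_p(p!) = 1`.
-/

open Nat

theorem padicValNat_factorial_eq_factorial_div_add (p n : ℕ) [Fact p.Prime] :
    padicValNat p n ! = padicValNat p (n / p)! + n / p := by
  rw [← padicValNat_mul_div_factorial, padicValNat_factorial_mul]

theorem padicValNat_factorial_self (p : ℕ) [Fact p.Prime] : padicValNat p p ! = 1 := by
  simpa using padicValNat_factorial_mul (p := p) 1

theorem Ideal.exists_pow_eq_prime_pow_padicValNat_factorial_mul {B : Type*} [CommRing B]
    {p : ℕ} [Fact p.Prime] {I : Ideal B} (h : ∀ a ∈ I, ∃ b ∈ I, a ^ p = (p : B) * b) {n : ℕ}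
    (hn : n ≠ 0) {a : B} (ha : a ∈ I) :
    ∃ b ∈ I, a ^ n = (p : B) ^ padicValNat p n ! * b := by
  induction n using Nat.strong_induction_on generalizing a with
  | _ n ih =>
  rw [padicValNat_factorial_eq_factorial_div_add]
  rcases eq_or_ne (n / p) 0 with hq | hq
  · exact ⟨a ^ n, I.pow_mem_of_mem ha n (Nat.pos_of_ne_zero hn), by simp [hq]⟩
  obtain ⟨b, hb, hab⟩ := h a ha
  obtain ⟨c, hc, hbc⟩ :=
    ih (n / p) (Nat.div_lt_self (Nat.pos_of_ne_zero hn) (Fact.out : p.Prime).one_lt) hq hb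
  refine ⟨c * a ^ (n % p), I.mul_mem_right _ hc, ?_⟩
  calc a ^ n = (a ^ p) ^ (n / p) * a ^ (n % p) := by rw [← pow_mul, ← pow_add, Nat.div_add_mod]
    _ = (p : B) ^ (n / p) * b ^ (n / p) * a ^ (n % p) := by rw [hab, mul_pow]
    _ = _ := by rw [hbc]; ring

/-- For an ideal 𝔟 in a commutative ring B and a prime p, the following are
equivalent: (1) for all n ≥ 1 and a ∈ 𝔟, a^n ∈ p^{v_p(n!)}·𝔟; (2) for all a ∈ 𝔟, a^p ∈ p·𝔟. -/
theorem dp_at_p_iff_dp {B : Type*} [CommRing B] (p : ℕ) (hp : p.Prime) (I : Ideal B) :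
    (∀ n : ℕ, 1 ≤ n → ∀ a ∈ I, ∃ b ∈ I,
        a ^ n = (p : B) ^ (padicValNat p (Nat.factorial n)) * b) ↔
    (∀ a ∈ I, ∃ b ∈ I, a ^ p = (p : B) * b) := by
  have : Fact p.Prime := ⟨hp⟩
  constructor
  · intro h a ha
    simpa [padicValNat_factorial_self] using h p hp.one_lt.le a ha
  · intro h n hn a ha
    exact I.exists_pow_eq_prime_pow_padicValNat_factorial_mul h (by omega) ha
end

section
/- Let p be a prime, A a commutative ring, S ⊆ A a subset, and 𝔞 the ideal generated by S. If a^p ∈ p·𝔞 for every a ∈ S, then a^p ∈ p·𝔞 for every a ∈ 𝔞. -/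
/-! The elements `a ∈ 𝔞` with `a ^ p ∈ p𝔞` form an ideal, so it contains `𝔞 = span S` as soon as
it contains `S`. Closure under addition holds because `(x + y) ^ p = x ^ p + y ^ p + p x y r`,
where the cross term `p x y r` lies in `p𝔞` once `x ∈ 𝔞`. -/

namespace Ideal

variable {A : Type*} [CommRing A] {p : ℕ}

def pthPowerSubideal (hp : p.Prime) (I : Ideal A) : Ideal A where
  carrier := {a | a ∈ I ∧ ∃ b ∈ I, a ^ p = (p : A) * b}
  zero_mem' := ⟨I.zero_mem, 0, I.zero_mem, by rw [zero_pow hp.ne_zero, mul_zero]⟩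
  add_mem' := by
    rintro x y ⟨hx, b, hb, hxb⟩ ⟨hy, c, hc, hyc⟩
    obtain ⟨r, hr⟩ := exists_add_pow_prime_eq hp x y
    refine ⟨I.add_mem hx hy, b + c + x * y * r,
      I.add_mem (I.add_mem hb hc) (I.mul_mem_right _ (I.mul_mem_right _ hx)), ?_⟩
    rw [hr, hxb, hyc]
    ring
  smul_mem' := by
    rintro c x ⟨hx, b, hb, hxb⟩
    exact ⟨I.mul_mem_left c hx, c ^ p * b, I.mul_mem_left _ hb, by
      rw [smul_eq_mul, mul_pow, hxb, mul_left_comm]⟩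

theorem mem_pthPowerSubideal {hp : p.Prime} {I : Ideal A} {a : A} :
    a ∈ pthPowerSubideal hp I ↔ a ∈ I ∧ ∃ b ∈ I, a ^ p = (p : A) * b :=
  Iff.rfl

end Ideal

/-- the divided-power condition a^p ∈ p·𝔞 need only be checked on a generating
set S of the ideal 𝔞 = span S. -/
theorem dp_of_generators {A : Type*} [CommRing A] (p : ℕ) (hp : p.Prime) (S : Set A)
    (h : ∀ a ∈ S, ∃ b ∈ Ideal.span S, a ^ p = (p : A) * b) :
    ∀ a ∈ Ideal.span S, ∃ b ∈ Ideal.span S, a ^ p = (p : A) * b := by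
  have hS : Ideal.span S ≤ Ideal.pthPowerSubideal hp (Ideal.span S) :=
    Ideal.span_le.mpr fun a ha => ⟨Ideal.subset_span ha, h a ha⟩
  exact fun a ha => (Ideal.mem_pthPowerSubideal.mp (hS ha)).2
end

section
/- Let p be a prime and A a commutative ring. If 𝔞 ⊆ A is an ideal satisfying a^p ∈ p·𝔞 for all a ∈ 𝔞, then for any ideal 𝔟 ⊆ A, the product ideal 𝔞𝔟 satisfies c^p ∈ p·(𝔞𝔟) for all c ∈ 𝔞𝔟. -/
/-!
The elements `c` of an ideal `K` with `c ^ p ∈ p K` form an ideal: it is closed under addition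
because `(x + y) ^ p = x ^ p + y ^ p + p x y r`, and the cross term lies in `p K`. For `K = 𝔞𝔟`
this ideal contains every product `a b` with `a ∈ 𝔞`, `b ∈ 𝔟`, since `(a b) ^ p = a ^ p b ^ p`;
hence it is all of `𝔞𝔟`.
-/

namespace Ideal

variable {A : Type*} [CommSemiring A] {p : ℕ}

theorem exists_add_pow_prime_eq_natCast_mul (hp : p.Prime) {K : Ideal A} {x y : A}
    (hx : x ∈ K) (hxp : ∃ b ∈ K, x ^ p = p * b) (hyp : ∃ b ∈ K, y ^ p = p * b) :
    ∃ b ∈ K, (x + y) ^ p = p * b := by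
  obtain ⟨bx, hbx, hx_eq⟩ := hxp
  obtain ⟨by', hby, hy_eq⟩ := hyp
  obtain ⟨r, hr⟩ := exists_add_pow_prime_eq hp x y
  refine ⟨bx + by' + x * y * r,
    add_mem (add_mem hbx hby) (K.mul_mem_right _ (K.mul_mem_right _ hx)), ?_⟩
  rw [hr, hx_eq, hy_eq]
  ring

def dividedPowerPart (hp : p.Prime) (K : Ideal A) : Ideal A where
  carrier := {c | c ∈ K ∧ ∃ b ∈ K, c ^ p = p * b}
  zero_mem' := ⟨K.zero_mem, 0, K.zero_mem, by simp [hp.ne_zero]⟩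
  add_mem' := fun ⟨hx, hxp⟩ ⟨hy, hyp⟩ =>
    ⟨add_mem hx hy, exists_add_pow_prime_eq_natCast_mul hp hx hxp hyp⟩
  smul_mem' r c := fun ⟨hc, b, hb, hcp⟩ =>
    ⟨K.mul_mem_left r hc, r ^ p * b, K.mul_mem_left _ hb, by
      rw [smul_eq_mul, mul_pow, hcp]; ring⟩

theorem mem_dividedPowerPart {hp : p.Prime} {K : Ideal A} {c : A} :
    c ∈ K.dividedPowerPart hp ↔ c ∈ K ∧ ∃ b ∈ K, c ^ p = p * b :=
  Iff.rfl

theorem mul_le_dividedPowerPart (hp : p.Prime) {I : Ideal A} (J : Ideal A)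
    (hI : ∀ a ∈ I, ∃ b ∈ I, a ^ p = p * b) : I * J ≤ (I * J).dividedPowerPart hp := by
  refine mul_le.mpr fun a ha b hb => mem_dividedPowerPart.mpr ⟨mul_mem_mul ha hb, ?_⟩
  obtain ⟨a', ha', hap⟩ := hI a ha
  refine ⟨a' * b ^ p, mul_mem_mul ha' (pow_mem_of_mem J hb p hp.pos), ?_⟩
  rw [mul_pow, hap, mul_assoc]

end Ideal

/-- if 𝔞 satisfies the divided-power property a^p ∈ p𝔞 for all a ∈ 𝔞, then so does
the product ideal 𝔞𝔟 for any ideal 𝔟. -/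
theorem dp_mul_ideal {A : Type*} [CommRing A] (p : ℕ) (hp : p.Prime) (I J : Ideal A)
    (h : ∀ a ∈ I, ∃ b ∈ I, a ^ p = (p : A) * b) :
    ∀ c ∈ I * J, ∃ b ∈ I * J, c ^ p = (p : A) * b :=
  fun _ hc => (Ideal.mul_le_dividedPowerPart hp J h hc).2
end

section
/- Let p be a prime, A a torsion-free ℤ_(p)-algebra (i.e. a commutative ring, torsion-free as ℤ-module, in which every prime other than p is invertible), and 𝔞 ⊆ A a divided-power ideal. If x ≡ y mod 𝔞 for x, y ∈ A, then for every m ≥ 0, x^{p^m} ≡ y^{p^m} mod p^m·𝔞. -/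
/-!
Write `u = v + q c` with `c ∈ I`. By the binomial theorem
`(v + q c)^p = v^p + (q c)^p + p v q c r`, and the divided-power condition `c^p = p c'` turns
`(q c)^p` into `p q (q^(p-1) c')`, so `u^p ≡ v^p mod p q I`. Starting from `q = 1` and iterating
with `q = p^m` gives the congruence modulo `p^m I`.
-/

theorem exists_mem_sub_pow_prime_eq_mul {A : Type*} [CommRing A] {p : ℕ} (hp : p.Prime)
    {I : Ideal A} (hdp : ∀ a ∈ I, ∃ b ∈ I, a ^ p = (p : A) * b)
    {q u v c : A} (hc : c ∈ I) (h : u - v = q * c) :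
    ∃ d ∈ I, u ^ p - v ^ p = (p : A) * q * d := by
  obtain ⟨r, hr⟩ := exists_add_pow_prime_eq hp v (q * c)
  obtain ⟨c', hc', hcp⟩ := hdp c hc
  refine ⟨q ^ (p - 1) * c' + v * c * r, I.add_mem (I.mul_mem_left _ hc')
    (I.mul_mem_right _ (I.mul_mem_left _ hc)), ?_⟩
  rw [show u = v + q * c by linear_combination h, hr, mul_pow, hcp,
    ← mul_pow_sub_one hp.ne_zero q]
  ring

theorem pow_prime_pow_congr_general {A : Type*} [CommRing A] (p : ℕ) (hp : p.Prime)
    (I : Ideal A) (hdp : ∀ a ∈ I, ∃ b ∈ I, a ^ p = (p : A) * b)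
    (x y : A) (hxy : x - y ∈ I) :
    ∀ m : ℕ, ∃ b ∈ I, x ^ (p ^ m) - y ^ (p ^ m) = (p : A) ^ m * b := by
  intro m
  induction m with
  | zero => exact ⟨x - y, hxy, by simp⟩
  | succ m ih =>
    obtain ⟨b, hb, hpow⟩ := ih
    obtain ⟨d, hd, hstep⟩ := exists_mem_sub_pow_prime_eq_mul hp hdp hb hpow
    refine ⟨d, hd, ?_⟩
    rw [pow_succ, pow_mul, pow_mul, hstep, pow_succ]
    ring

/-- Let A be a torsion-free ℤ_(p)-algebra (torsion-free as ℤ-module, every prime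
other than p invertible) and 𝔞 a divided-power ideal.  If x ≡ y mod 𝔞 then
x^{p^m} ≡ y^{p^m} mod p^m·𝔞 for all m ≥ 0. -/
theorem pow_prime_pow_congr {A : Type*} [CommRing A] (p : ℕ) (hp : p.Prime)
    (htf : ∀ (n : ℤ) (a : A), n ≠ 0 → n • a = 0 → a = 0)
    (hinv : ∀ q : ℕ, q.Prime → q ≠ p → IsUnit (q : A))
    (I : Ideal A) (hdp : ∀ a ∈ I, ∃ b ∈ I, a ^ p = (p : A) * b)
    (x y : A) (hxy : x - y ∈ I) :
    ∀ m : ℕ, ∃ b ∈ I, x ^ (p ^ m) - y ^ (p ^ m) = (p : A) ^ m * b :=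
  pow_prime_pow_congr_general p hp I hdp x y hxy
end

section
/- Let p be a prime, A a torsion-free ℤ_(p)-algebra, and 𝔞 ⊆ A a divided-power ideal. If x ≡ y mod 𝔞 for x, y ∈ A, then for every n ≥ 1, x^n ≡ y^n mod p^{v_p(n)}·𝔞, where v_p(n) is the p-adic valuation of n. -/
/-!
Write `x = y + p^k c` with `c ∈ 𝔞`. Expanding `(y + p^k c)^p - y^p` binomially, the middle terms
gain a factor `p` from the binomial coefficient, and the top term `p^{kp} c^p` gains one from the
divided-power condition `c^p ∈ p𝔞`. So each `p`-th power raises the exponent of `p` by one, which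
handles `n = p^v`; for general `n = p^v m` use that `a - b` divides `a^m - b^m`.
-/

open Ideal

theorem Ideal.pow_sub_pow_mem {R : Type*} [CommRing R] {J : Ideal R} {a b : R} (h : a - b ∈ J)
    (m : ℕ) : a ^ m - b ^ m ∈ J := by
  obtain ⟨e, he⟩ := sub_dvd_pow_sub_pow a b m
  exact he ▸ J.mul_mem_right e h

section DividedPowerIdeal

variable {A : Type*} [CommRing A] {p : ℕ} (hp : p.Prime) {I : Ideal A}
  (hdp : ∀ a ∈ I, ∃ b ∈ I, a ^ p = (p : A) * b)
include hp hdp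

theorem add_mul_pow_sub_pow_mem_span_mul (π w : A) {c : A} (hc : c ∈ I) :
    (w + π * c) ^ p - w ^ p ∈ span {(p : A) * π} * I := by
  rw [add_pow, Finset.sum_range_succ, Nat.choose_self, Nat.sub_self, pow_zero, Nat.cast_one,
    mul_one, mul_one, add_sub_cancel_right]
  refine sum_mem _ fun k hk => ?_
  have hkp : p - k ≠ 0 := by have := Finset.mem_range.1 hk; omega
  rcases Nat.eq_zero_or_pos k with rfl | hk0
  · obtain ⟨b, hb, hcb⟩ := hdp c hc
    have hterm : w ^ 0 * (π * c) ^ (p - 0) * (p.choose 0 : A) = (p * π) * (π ^ (p - 1) * b) := by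
      rw [Nat.sub_zero, mul_pow, hcb, ← pow_sub_one_mul hp.ne_zero π]
      simp only [pow_zero, Nat.choose_zero_right, Nat.cast_one]
      ring
    exact hterm ▸ mul_mem_mul (mem_span_singleton_self _) (I.mul_mem_left _ hb)
  · obtain ⟨t, ht⟩ := hp.dvd_choose_self hk0.ne' (Finset.mem_range.1 hk)
    have hterm : w ^ k * (π * c) ^ (p - k) * (p.choose k : A)
        = (p * π) * (t * w ^ k * (π * c) ^ (p - k - 1) * c) := by
      rw [ht, ← pow_sub_one_mul hkp]
      push_cast
      ring
    exact hterm ▸ mul_mem_mul (mem_span_singleton_self _) (I.mul_mem_left _ hc)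

theorem pow_pow_sub_pow_pow_mem_span_mul {x y : A} (hxy : x - y ∈ I) (k : ℕ) :
    x ^ p ^ k - y ^ p ^ k ∈ span {(p : A) ^ k} * I := by
  induction k with
  | zero => simpa [span_singleton_one] using hxy
  | succ k ih =>
    obtain ⟨c, hc, hxc⟩ := mem_span_singleton_mul.1 ih
    rw [pow_succ p k, pow_mul, pow_mul, eq_add_of_sub_eq' hxc.symm, pow_succ' (p : A) k]
    exact add_mul_pow_sub_pow_mem_span_mul hp hdp _ _ hc

end DividedPowerIdeal

theorem pow_congr_padic_general {A : Type*} [CommRing A] (p : ℕ) (hp : p.Prime)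
    (I : Ideal A) (hdp : ∀ a ∈ I, ∃ b ∈ I, a ^ p = (p : A) * b)
    (x y : A) (hxy : x - y ∈ I) :
    ∀ n : ℕ, 1 ≤ n → ∃ b ∈ I, x ^ n - y ^ n = (p : A) ^ (padicValNat p n) * b := by
  intro n _
  obtain ⟨m, hm⟩ : p ^ padicValNat p n ∣ n := pow_padicValNat_dvd
  have hmem : x ^ n - y ^ n ∈ span {(p : A) ^ padicValNat p n} * I := by
    have := pow_sub_pow_mem (pow_pow_sub_pow_pow_mem_span_mul hp hdp hxy (padicValNat p n)) m
    rwa [← pow_mul, ← pow_mul, ← hm] at this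
  obtain ⟨b, hb, hxb⟩ := mem_span_singleton_mul.1 hmem
  exact ⟨b, hb, hxb.symm⟩

/-- Let A be a torsion-free ℤ_(p)-algebra and 𝔞 a divided-power ideal.  If
x ≡ y mod 𝔞 then x^n ≡ y^n mod p^{v_p(n)}·𝔞 for all n ≥ 1. -/
theorem pow_congr_padic {A : Type*} [CommRing A] (p : ℕ) (hp : p.Prime)
    (htf : ∀ (n : ℤ) (a : A), n ≠ 0 → n • a = 0 → a = 0)
    (hinv : ∀ q : ℕ, q.Prime → q ≠ p → IsUnit (q : A))
    (I : Ideal A) (hdp : ∀ a ∈ I, ∃ b ∈ I, a ^ p = (p : A) * b)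
    (x y : A) (hxy : x - y ∈ I) :
    ∀ n : ℕ, 1 ≤ n → ∃ b ∈ I, x ^ n - y ^ n = (p : A) ^ (padicValNat p n) * b :=
  pow_congr_padic_general p hp I hdp x y hxy
end

section
/- The Artin-Hasse exponential series F(z) = exp(Σ_{j≥0} z^{p^j}/p^j), a priori in ℚ⟦z⟧, satisfies the product formula F(z) = Π_{d ≥ 1, p ∤ d} (1 − z^d)^{−μ(d)/d}, where μ is the Möbius function. -/
open PowerSeries in
/-- The exponential `exp f = Σ_k f^k / k!` of a power series (intended for `f` with zero
constant term, in which case the coefficientwise sums are finite). -/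
noncomputable def PowerSeriesExpOf (f : PowerSeries ℚ) : PowerSeries ℚ :=
  PowerSeries.mk fun n =>
    ∑ k ∈ Finset.range (n + 1), (1 / (Nat.factorial k : ℚ)) * coeff n (f ^ k)

open scoped Classical in
/-- The series Σ_{j ≥ 0} z^{p^j}/p^j: its coefficient at n = p^j is 1/p^j = 1/n. -/
noncomputable def AHinner (p : ℕ) : PowerSeries ℚ :=
  PowerSeries.mk fun n => if ∃ j : ℕ, n = p ^ j then (1 : ℚ) / n else 0

/-- The Artin–Hasse exponential series F(z) = exp(Σ_{j≥0} z^{p^j}/p^j) ∈ ℚ⟦z⟧. -/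
noncomputable def ArtinHasse (p : ℕ) : PowerSeries ℚ := PowerSeriesExpOf (AHinner p)

open PowerSeries in
/-- `(1 - z^d)^α` for a rational exponent α, via the binomial series
`(1 + u)^α = Σ_k (α choose k) u^k` with `u = -z^d`. -/
noncomputable def OneSubZdPow (α : ℚ) (d : ℕ) : PowerSeries ℚ :=
  PowerSeries.mk fun n =>
    ∑ k ∈ Finset.range (n + 1), Ring.choose α k * coeff n ((-(X : PowerSeries ℚ) ^ d) ^ k)

/-!
Both sides have constant term `1` and satisfy linear differential equations `f' = w f`, whose
solutions are determined up to degree `n` by `f(0)` and by `w` up to degree `n - 1`. Writing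
`F = exp ∘ A` and `(1 - z^d)^α` as the binomial series `(1 + t)^α` at `t = -z^d`, the chain rule
gives `F'/F = A' = Σ_j z^(p^j - 1)`, while the logarithmic derivative of `(1 - z^d)^(-μ(d)/d)` is
`μ(d) z^(d-1) / (1 - z^d) = μ(d) Σ_{d ∣ m+1} z^m`. Summed over `p ∤ d`, the coefficient of
`z^m` is the sum of `μ` over the divisors of the prime-to-`p` part of `m + 1`, which is `1`
exactly when `m + 1` is a power of `p` and `0` otherwise; only factors with `d ≤ m + 1` enter,
so the truncated product suffices.
-/

namespace PowerSeries

variable {R : Type*} [CommRing R]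

theorem coeff_subst_eq_sum_range {f g : R⟦X⟧} (hg : constantCoeff g = 0) (n : ℕ) :
    coeff n (f.subst g) = ∑ k ∈ Finset.range (n + 1), coeff k f • coeff n (g ^ k) := by
  rw [coeff_subst' (.of_constantCoeff_zero' hg)]
  refine finsum_eq_sum_of_support_subset _ fun k hk =>
    Finset.mem_coe.mpr (Finset.mem_range.mpr ?_)
  by_contra! hnk
  have hX : X ^ k ∣ g ^ k := pow_dvd_pow_of_dvd (X_dvd_iff.mpr hg) k
  exact hk (show coeff k f • coeff n (g ^ k) = 0 by
    rw [X_pow_dvd_iff.mp hX n (by omega), smul_zero])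

theorem coeff_eq_of_derivative_eq_mul [IsAddTorsionFree R] {f g u v : R⟦X⟧}
    (hf : d⁄dX R f = u * f) (hg : d⁄dX R g = v * g) (h0 : constantCoeff f = constantCoeff g)
    {n : ℕ} (huv : ∀ m < n, coeff m u = coeff m v) : ∀ m ≤ n, coeff m f = coeff m g := by
  intro m
  induction m using Nat.strong_induction_on with
  | _ m ih =>
    intro hm
    rcases m with _ | m
    · simpa using h0
    · have hd : coeff m (d⁄dX R f) = coeff m (d⁄dX R g) := by
        rw [hf, hg, coeff_mul, coeff_mul]
        refine Finset.sum_congr rfl fun ij hij => ?_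
        have := Finset.HasAntidiagonal.mem_antidiagonal.mp hij
        rw [huv ij.1 (by omega), ih ij.2 (by omega) (by omega)]
      rw [coeff_derivative, coeff_derivative, ← Nat.cast_succ, mul_comm, ← nsmul_eq_mul,
        mul_comm, ← nsmul_eq_mul] at hd
      exact (smul_right_inj (Nat.succ_ne_zero m)).mp hd

theorem one_add_X_mul_derivative_binomialSeries [BinomialRing R] (r : R) :
    (1 + X) * d⁄dX R (binomialSeries R r) = r • binomialSeries R r := by
  have hchoose (k : ℕ) : (k + 1) * Ring.choose r (k + 1) = Ring.choose r k * (r - k) := by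
    simpa [Nat.choose_succ_self_right, Ring.choose_one_right, nsmul_eq_mul] using
      Ring.choose_smul_choose r (Nat.le_succ k)
  ext n
  rcases n with _ | n
  · rw [add_mul, one_mul, map_add, coeff_zero_X_mul, coeff_derivative, coeff_smul]
    simp [binomialSeries_coeff]
  · rw [add_mul, one_mul, map_add, coeff_succ_X_mul, coeff_derivative, coeff_derivative,
      coeff_smul]
    simp only [binomialSeries_coeff, smul_eq_mul, mul_one]
    have h := hchoose (n + 1)
    push_cast at h ⊢
    linear_combination h

theorem one_add_mul_derivative_subst_binomialSeries [BinomialRing R] (r : R) {g : R⟦X⟧}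
    (hg : HasSubst g) :
    (1 + g) * d⁄dX R ((binomialSeries R r).subst g) =
      r • (binomialSeries R r).subst g * d⁄dX R g := by
  have h := congrArg (subst g) (one_add_X_mul_derivative_binomialSeries r)
  rw [subst_mul hg, subst_add hg, subst_X hg, subst_smul hg, ← coe_substAlgHom hg, map_one,
    coe_substAlgHom] at h
  rw [derivative_subst hg, ← mul_assoc, h]

variable (R) in
/-- The series `X^(d-1) / (1 - X^d)`. -/
def dvdSuccSeries (d : ℕ) : R⟦X⟧ :=
  mk fun m => if d ∣ m + 1 then 1 else 0

theorem coeff_dvdSuccSeries (d m : ℕ) :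
    coeff m (dvdSuccSeries R d) = if d ∣ m + 1 then 1 else 0 :=
  coeff_mk _ _

theorem one_sub_X_pow_mul_dvdSuccSeries {d : ℕ} (hd : d ≠ 0) :
    (1 - X ^ d) * dvdSuccSeries R d = X ^ (d - 1) := by
  ext m
  rw [sub_mul, one_mul, map_sub, coeff_X_pow_mul', coeff_dvdSuccSeries, coeff_X_pow]
  by_cases hdm : d ≤ m
  · have hdvd : d ∣ m + 1 ↔ d ∣ m - d + 1 := by
      rw [show m + 1 = (m - d + 1) + d by omega, Nat.dvd_add_self_right]
    rw [if_pos hdm, coeff_dvdSuccSeries, if_neg (show m ≠ d - 1 by omega), sub_eq_zero]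
    exact if_congr hdvd rfl rfl
  · have hdvd : d ∣ m + 1 ↔ m = d - 1 :=
      ⟨fun h => by have := Nat.le_of_dvd m.succ_pos h; omega, fun h => ⟨1, by omega⟩⟩
    rw [if_neg hdm, sub_zero]
    exact if_congr hdvd rfl rfl

end PowerSeries

theorem Derivation.map_prod_of_forall_eq_mul {R A ι : Type*} [CommSemiring R] [CommSemiring A]
    [Algebra R A] (D : Derivation R A A) (s : Finset ι) {f v : ι → A}
    (h : ∀ i ∈ s, D (f i) = v i * f i) :
    D (∏ i ∈ s, f i) = (∑ i ∈ s, v i) * ∏ i ∈ s, f i := by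
  induction s using Finset.cons_induction with
  | empty => simp
  | cons a s ha ih =>
    rw [Finset.prod_cons, Finset.sum_cons, D.leibniz, smul_eq_mul, smul_eq_mul,
      h a (Finset.mem_cons_self a s), ih fun i hi => h i (Finset.mem_cons_of_mem hi)]
    ring

theorem Nat.filter_not_dvd_divisors {p N : ℕ} (hp : p.Prime) (hN : N ≠ 0) :
    {d ∈ N.divisors | ¬ p ∣ d} = (ordCompl[p] N).divisors := by
  ext d
  simp only [Finset.mem_filter, Nat.mem_divisors]
  constructor
  · rintro ⟨⟨hdN, -⟩, hpd⟩
    exact ⟨Nat.dvd_ordCompl_of_dvd_not_dvd hdN hpd, (Nat.ordCompl_pos p hN).ne'⟩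
  · rintro ⟨hdM, -⟩
    exact ⟨⟨hdM.trans (Nat.ordCompl_dvd N p), hN⟩,
      fun hpd => Nat.not_dvd_ordCompl hp hN (hpd.trans hdM)⟩

open PowerSeries ArithmeticFunction

open scoped Classical in
theorem ArithmeticFunction.sum_moebius_filter_not_dvd_divisors {p N : ℕ} (hp : p.Prime)
    (hN : N ≠ 0) :
    ∑ d ∈ N.divisors with ¬ p ∣ d, moebius d = if ∃ j, N = p ^ j then 1 else 0 := by
  rw [Nat.filter_not_dvd_divisors hp hN, ← coe_mul_zeta_apply, moebius_mul_coe_zeta, one_apply]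
  refine if_congr ⟨fun h => ⟨N.factorization p, ?_⟩, ?_⟩ rfl rfl
  · exact (Nat.eq_of_dvd_of_div_eq_one (Nat.ordProj_dvd N p) h).symm
  · rintro ⟨j, rfl⟩
    exact Nat.ordCompl_self_pow hp

theorem oneSubZdPow_eq_subst (α : ℚ) {d : ℕ} (hd : d ≠ 0) :
    OneSubZdPow α d = (PowerSeries.binomialSeries ℚ α).subst (-(X : ℚ⟦X⟧) ^ d) := by
  ext n
  rw [OneSubZdPow, coeff_mk, coeff_subst_eq_sum_range (by simp [hd])]
  simp [binomialSeries_coeff]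

theorem one_sub_X_pow_mul_derivative_oneSubZdPow (α : ℚ) {d : ℕ} (hd : d ≠ 0) :
    (1 - X ^ d) * d⁄dX ℚ (OneSubZdPow α d) =
      C (-(α * d)) * X ^ (d - 1) * OneSubZdPow α d := by
  have hg : HasSubst (-(X : ℚ⟦X⟧) ^ d) := .of_constantCoeff_zero' (by simp [hd])
  rw [oneSubZdPow_eq_subst α hd, sub_eq_add_neg, one_add_mul_derivative_subst_binomialSeries α hg,
    map_neg, Derivation.leibniz_pow, derivative_X, smul_eq_C_mul]
  simp only [nsmul_eq_mul, smul_eq_mul, mul_one, map_neg, map_mul, map_natCast]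
  ring

theorem derivative_oneSubZdPow (c : ℚ) {d : ℕ} (hd : d ≠ 0) :
    d⁄dX ℚ (OneSubZdPow (-c / d) d) = C c * dvdSuccSeries ℚ d * OneSubZdPow (-c / d) d := by
  have hne : (1 - X ^ d : ℚ⟦X⟧) ≠ 0 := fun h => by simpa [hd] using congrArg constantCoeff h
  apply mul_left_cancel₀ hne
  calc (1 - X ^ d) * d⁄dX ℚ (OneSubZdPow (-c / d) d)
      = C c * X ^ (d - 1) * OneSubZdPow (-c / d) d := by
        rw [one_sub_X_pow_mul_derivative_oneSubZdPow _ hd,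
          div_mul_cancel₀ _ (Nat.cast_ne_zero.mpr hd), neg_neg]
    _ = (1 - X ^ d) * (C c * dvdSuccSeries ℚ d * OneSubZdPow (-c / d) d) := by
        rw [← one_sub_X_pow_mul_dvdSuccSeries hd]
        ring

theorem constantCoeff_oneSubZdPow (α : ℚ) (d : ℕ) : constantCoeff (OneSubZdPow α d) = 1 := by
  rw [← coeff_zero_eq_constantCoeff_apply, OneSubZdPow, coeff_mk]
  simp

theorem constantCoeff_powerSeriesExpOf (A : ℚ⟦X⟧) :
    constantCoeff (PowerSeriesExpOf A) = 1 := by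
  rw [← coeff_zero_eq_constantCoeff_apply, PowerSeriesExpOf, coeff_mk]
  simp

theorem powerSeriesExpOf_eq_subst {A : ℚ⟦X⟧} (hA : constantCoeff A = 0) :
    PowerSeriesExpOf A = (exp ℚ).subst A := by
  ext n
  rw [PowerSeriesExpOf, coeff_mk, coeff_subst_eq_sum_range hA]
  simp

theorem derivative_powerSeriesExpOf {A : ℚ⟦X⟧} (hA : constantCoeff A = 0) :
    d⁄dX ℚ (PowerSeriesExpOf A) = d⁄dX ℚ A * PowerSeriesExpOf A := by
  rw [powerSeriesExpOf_eq_subst hA, derivative_subst (.of_constantCoeff_zero' hA),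
    derivative_exp, mul_comm]

theorem constantCoeff_AHinner (p : ℕ) : constantCoeff (AHinner p) = 0 := by
  rw [← coeff_zero_eq_constantCoeff_apply, AHinner, coeff_mk]
  split_ifs <;> simp

open scoped Classical in
theorem coeff_derivative_AHinner (p m : ℕ) :
    coeff m (d⁄dX ℚ (AHinner p)) = if ∃ j, m + 1 = p ^ j then 1 else 0 := by
  rw [coeff_derivative, AHinner, coeff_mk]
  split_ifs
  · push_cast
    field_simp
  · rw [zero_mul]

open scoped Classical in
theorem coeff_sum_moebius_mul_dvdSuccSeries {p : ℕ} (hp : p.Prime) {m n : ℕ} (hm : m < n) :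
    coeff m (∑ d ∈ (Finset.range (n + 1)).filter (fun d => 0 < d ∧ ¬ p ∣ d),
        C (moebius d : ℚ) * dvdSuccSeries ℚ d) =
      if ∃ j, m + 1 = p ^ j then 1 else 0 := by
  have hdivisors :
      {d ∈ (Finset.range (n + 1)).filter (fun d => 0 < d ∧ ¬ p ∣ d) | d ∣ m + 1} =
        {d ∈ (m + 1).divisors | ¬ p ∣ d} := by
    ext d
    simp only [Finset.mem_filter, Finset.mem_range, Nat.mem_divisors]
    constructor
    · rintro ⟨⟨-, -, hpd⟩, hdvd⟩
      exact ⟨⟨hdvd, m.succ_ne_zero⟩, hpd⟩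
    · rintro ⟨⟨hdvd, -⟩, hpd⟩
      have := Nat.le_of_dvd m.succ_pos hdvd
      exact ⟨⟨by omega, Nat.pos_of_dvd_of_pos hdvd m.succ_pos, hpd⟩, hdvd⟩
  simp only [map_sum, coeff_C_mul, coeff_dvdSuccSeries, mul_ite, mul_one, mul_zero]
  rw [← Finset.sum_filter, hdivisors]
  exact_mod_cast sum_moebius_filter_not_dvd_divisors hp m.succ_ne_zero

open PowerSeries ArithmeticFunction in
/-- F(z) = Π_{d ≥ 1, p ∤ d} (1 − z^d)^{−μ(d)/d}, as an identity of formal power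
series: every coefficient of F agrees with the corresponding coefficient of the (finite,
sufficiently deep) partial product, factors with d > n not affecting the n-th coefficient. -/
theorem artinHasse_prod_formula (p : ℕ) (hp : p.Prime) (n : ℕ) :
    coeff n (ArtinHasse p) =
      coeff n (∏ d ∈ (Finset.range (n + 1)).filter (fun d => 0 < d ∧ ¬ p ∣ d),
        OneSubZdPow (-(moebius d : ℚ) / d) d) := by
  refine coeff_eq_of_derivative_eq_mul (derivative_powerSeriesExpOf (constantCoeff_AHinner p))
    ((d⁄dX ℚ).map_prod_of_forall_eq_mul _ fun d hd =>
      derivative_oneSubZdPow _ (Finset.mem_filter.mp hd).2.1.ne')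
    ?_ (fun m hm => ?_) n le_rfl
  · simp only [constantCoeff_powerSeriesExpOf, map_prod, constantCoeff_oneSubZdPow,
      Finset.prod_const_one]
  · rw [coeff_sum_moebius_mul_dvdSuccSeries hp hm, coeff_derivative_AHinner]
end

section
/- In the ring of symmetric functions, for every n ≥ 1: p_n = (−1)^n · n · Σ_{λ ⊢ n} ((−1)^m / m) · (m choose r_1(λ), r_2(λ), …) · e_λ, where the sum is over partitions λ of n, m is the number of nonzero parts of λ, r_a(λ) is the number of parts of λ equal to a, and e_λ is the product of elementary symmetric functions over the parts of λ. -/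
/-!
Newton's identity `p_n = (-1)^(n+1) n e_n - ∑_{0<i<n} (-1)^i e_i p_{n-i}` determines `p_n`
recursively, so it suffices to check that the claimed expansion `p_n = ∑_{λ ⊢ n} c(λ) e_λ`
satisfies the same recursion. Substituting the expansion of `p_{n-i}` and adding the part `i` to
each partition of `n - i` turns the right-hand side into a sum over partitions `λ ⊢ n` and parts
`i` of `λ`, so the claim reduces to the coefficient identity
`c(λ) = -∑_{i ∈ λ} (-1)^i c(λ ∖ i)` over the distinct parts `i` of `λ ≠ (n)`. Writing
`c(λ) = ± n (m-1)! / ∏ r_a!`, removing a part `i` divides the denominator by `r_i`, and the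
identity comes down to `∑_i r_i (n - i) = n (m - 1)`.
-/

open Finset MvPolynomial Nat

namespace Multiset

theorem count_mul_prod_factorial_count_erase {α : Type*} [DecidableEq α] {s : Multiset α}
    {a : α} (ha : a ∈ s) :
    s.count a * ∏ b ∈ (s.erase a).toFinset, ((s.erase a).count b)! =
      ∏ b ∈ s.toFinset, (s.count b)! := by
  have hsub : (s.erase a).toFinset ⊆ s.toFinset := fun b hb => by
    simpa using mem_of_mem_erase (mem_toFinset.1 hb)
  rw [prod_subset hsub fun b _ hb => by rw [count_eq_zero_of_notMem (by simpa using hb)]; rfl,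
    ← mul_prod_erase _ _ (mem_toFinset.2 ha), ← mul_prod_erase _ _ (mem_toFinset.2 ha),
    ← mul_assoc, count_erase_self, Nat.mul_factorial_pred (count_pos.2 ha).ne']
  congr 1
  exact prod_congr rfl fun b hb => by rw [count_erase_of_ne (ne_of_mem_erase hb)]

theorem sum_count_mul_sum_sub (s : Multiset ℕ) :
    ∑ a ∈ s.toFinset, (s.count a : ℚ) * (s.sum - a) = s.sum * (card s - 1) := by
  have hcard : ∑ a ∈ s.toFinset, (s.count a : ℚ) = card s := by
    exact_mod_cast toFinset_sum_count_eq s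
  have hsum : ∑ a ∈ s.toFinset, (s.count a : ℚ) * a = s.sum := by
    exact_mod_cast (sum_multiset_count s).symm
  simp only [mul_sub, sum_sub_distrib, ← sum_mul, hcard, hsum]
  ring

end Multiset

theorem Finset.sum_antidiagonal_filter_fst_mem_Ioo {M : Type*} [AddCommMonoid M]
    (f : ℕ → ℕ → M) (n : ℕ) :
    ∑ a ∈ antidiagonal n with a.1 ∈ Set.Ioo 0 n, f a.1 a.2 =
      ∑ i ∈ Ioo 0 n, f i (n - i) := by
  refine sum_nbij' Prod.fst (fun i => (i, n - i)) ?_ ?_ ?_ ?_ ?_ <;>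
    simp +contextual [Set.mem_Ioo] <;> grind

namespace Nat.Partition

theorem sum_cons_parts {M : Type*} [AddCommMonoid M] {n a : ℕ} (ha1 : 1 ≤ a) (ha : a ≤ n)
    (G : Multiset ℕ → M) :
    ∑ μ : (n - a).Partition, G (a ::ₘ μ.parts) =
      ∑ p : n.Partition with a ∈ p.parts, G p.parts := by
  rw [sum_subtype (p := fun p : n.Partition => a ∈ p.parts) _ (by simp),
    ← (partitionWithPartEquiv ha1 ha).symm.sum_comp]
  simp only [partitionWithPartEquiv_symm_apply_parts]

theorem eq_indiscrete_of_mem_parts {n : ℕ} {p : n.Partition} (h : n ∈ p.parts) :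
    p = indiscrete n := by
  have hsum := Multiset.sum_erase h
  rw [p.parts_sum, add_eq_left, Multiset.sum_eq_zero_iff] at hsum
  have hrest : p.parts.erase n = 0 := Multiset.eq_zero_of_forall_notMem fun i hi =>
    (p.parts_pos (Multiset.mem_of_mem_erase hi)).ne' (hsum i hi)
  ext1
  rw [← Multiset.cons_erase h, hrest, indiscrete_parts (p.parts_pos h).ne']
  rfl

end Nat.Partition

noncomputable def psumEsymmCoeff (s : Multiset ℕ) : ℚ :=
  (-1) ^ (s.sum + s.card) * s.sum * (s.card - 1)! / ∏ a ∈ s.toFinset, ((s.count a)! : ℚ)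

@[simp]
theorem psumEsymmCoeff_zero : psumEsymmCoeff 0 = 0 := by
  simp [psumEsymmCoeff]

@[simp]
theorem psumEsymmCoeff_singleton (n : ℕ) : psumEsymmCoeff {n} = (-1) ^ (n + 1) * n := by
  simp [psumEsymmCoeff]

theorem psumEsymmCoeff_eq_of_ne_zero {s : Multiset ℕ} (hs : s ≠ 0) :
    psumEsymmCoeff s = (-1) ^ s.sum * s.sum * ((-1) ^ s.card / s.card *
      (s.card ! / ∏ a ∈ s.toFinset, ((s.count a)! : ℚ))) := by
  obtain ⟨k, hk⟩ := Nat.exists_eq_add_one_of_ne_zero (Multiset.card_pos.2 hs).ne'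
  rw [psumEsymmCoeff, hk, add_tsub_cancel_right, factorial_succ]
  push_cast
  field_simp
  ring

theorem sum_neg_one_pow_mul_psumEsymmCoeff_erase {s : Multiset ℕ} (hs : s.card ≠ 1) :
    ∑ a ∈ s.toFinset, (-1) ^ a * psumEsymmCoeff (s.erase a) = -psumEsymmCoeff s := by
  obtain hs0 | ⟨k, hk⟩ : s.card = 0 ∨ ∃ k, s.card = k + 2 := by
    rcases h : s.card with _ | _ | k <;> simp_all
  · simp [Multiset.card_eq_zero.1 hs0]
  set P := ∏ a ∈ s.toFinset, ((s.count a)! : ℚ) with hPdef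
  have hterm : ∀ a ∈ s.toFinset, (-1) ^ a * psumEsymmCoeff (s.erase a) =
      -((-1) ^ (s.sum + k) * k ! / P) * (s.count a * (s.sum - a)) := by
    intro a ha
    rw [Multiset.mem_toFinset] at ha
    have hsum := Multiset.sum_erase ha
    have hcard : (s.erase a).card = k + 1 := by rw [Multiset.card_erase_of_mem ha, hk]; rfl
    have hprod :
        (∏ b ∈ (s.erase a).toFinset, (((s.erase a).count b)! : ℚ)) * s.count a = P := by
      rw [mul_comm, hPdef]
      exact_mod_cast Multiset.count_mul_prod_factorial_count_erase ha
    have hcount : (s.count a : ℚ) ≠ 0 := by exact_mod_cast (Multiset.count_pos.2 ha).ne'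
    rw [psumEsymmCoeff, hcard, add_tsub_cancel_right, ← hsum, eq_div_of_mul_eq hcount hprod]
    push_cast
    field_simp
    ring
  rw [sum_congr rfl hterm, ← mul_sum, Multiset.sum_count_mul_sum_sub, psumEsymmCoeff, hk]
  push_cast [factorial_succ]
  ring

theorem Nat.Partition.psumEsymmCoeff_parts {n : ℕ} (p : n.Partition) :
    psumEsymmCoeff p.parts = (if p = indiscrete n then (-1 : ℚ) ^ (n + 1) * n else 0) -
      ∑ i ∈ Ioo 0 n with i ∈ p.parts, (-1) ^ i * psumEsymmCoeff (p.parts.erase i) := by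
  by_cases hp : p = indiscrete n
  · subst hp
    rcases eq_or_ne n 0 with rfl | hn
    · simp
    · simp [indiscrete_parts hn, filter_eq']
  have hn : n ∉ p.parts := mt eq_indiscrete_of_mem_parts hp
  have hfilter : {i ∈ Ioo 0 n | i ∈ p.parts} = p.parts.toFinset := by
    ext i
    simp only [mem_filter, mem_Ioo, Multiset.mem_toFinset, and_iff_right_iff_imp]
    exact fun hi => ⟨p.parts_pos hi, (le_of_mem_parts hi).lt_of_ne (ne_of_mem_of_not_mem hi hn)⟩
  have hcard : p.parts.card ≠ 1 := fun h => by
    obtain ⟨a, ha⟩ := Multiset.card_eq_one.1 h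
    have hsum := p.parts_sum
    rw [ha, Multiset.sum_singleton] at hsum
    exact hn (by simp [ha, hsum])
  rw [if_neg hp, hfilter, sum_neg_one_pow_mul_psumEsymmCoeff_erase hcard, zero_sub, neg_neg]

theorem psum_eq_sum_psumEsymmCoeff_mul_esymmPart (σ : Type*) [Fintype σ] {n : ℕ} (hn : 0 < n) :
    psum σ ℚ n = ∑ p : n.Partition, C (psumEsymmCoeff p.parts) * esymmPart σ ℚ p := by
  induction n using Nat.strong_induction_on with
  | _ n ih =>
  have hlower : ∑ a ∈ antidiagonal n with a.1 ∈ Set.Ioo 0 n,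
      (-1) ^ a.1 * esymm σ ℚ a.1 * psum σ ℚ a.2 = ∑ p : n.Partition,
        C (∑ i ∈ Ioo 0 n with i ∈ p.parts, (-1) ^ i * psumEsymmCoeff (p.parts.erase i)) *
          esymmPart σ ℚ p := by
    calc _ = ∑ i ∈ Ioo 0 n, ∑ μ : (n - i).Partition,
          C ((-1) ^ i * psumEsymmCoeff ((i ::ₘ μ.parts).erase i)) *
            ((i ::ₘ μ.parts).map (esymm σ ℚ)).prod := by
          rw [sum_antidiagonal_filter_fst_mem_Ioo
            fun i j => (-1) ^ i * esymm σ ℚ i * psum σ ℚ j]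
          refine sum_congr rfl fun i hi => ?_
          rw [mem_Ioo] at hi
          rw [ih (n - i) (by omega) (by omega), mul_sum]
          refine sum_congr rfl fun μ _ => ?_
          simp only [Multiset.erase_cons_head, Multiset.map_cons, Multiset.prod_cons, map_mul,
            map_pow, map_neg, map_one, esymmPart]
          ring
      _ = ∑ p : n.Partition, ∑ i ∈ Ioo 0 n with i ∈ p.parts,
          C ((-1) ^ i * psumEsymmCoeff (p.parts.erase i)) * esymmPart σ ℚ p := by
          rw [sum_congr rfl fun i hi =>
            Partition.sum_cons_parts (mem_Ioo.1 hi).1 (mem_Ioo.1 hi).2.le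
            fun s => C ((-1) ^ i * psumEsymmCoeff (s.erase i)) * (s.map (esymm σ ℚ)).prod]
          simp only [sum_filter, esymmPart]
          exact sum_comm
      _ = _ := by simp only [map_sum, sum_mul]
  have hnewton : (-1) ^ (n + 1) * n * esymm σ ℚ n = ∑ p : n.Partition,
      C (if p = .indiscrete n then (-1 : ℚ) ^ (n + 1) * n else 0) * esymmPart σ ℚ p := by
    simp [apply_ite C, ite_mul, esymmPart_indiscrete]
  rw [psum_eq_mul_esymm_sub_sum σ ℚ n hn, hlower, hnewton, ← sum_sub_distrib]
  simp only [← sub_mul, ← map_sub, ← Partition.psumEsymmCoeff_parts]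

open MvPolynomial in
theorem psum_eq_sum_partitions_esymm_general (σ : Type*) [Fintype σ] (n : ℕ)
    (hn : 1 ≤ n) :
    psum σ ℚ n =
      C ((-1 : ℚ) ^ n * (n : ℚ)) *
        ∑ lam : n.Partition,
          C ((-1 : ℚ) ^ lam.parts.card / (lam.parts.card : ℚ) *
              ((Nat.factorial lam.parts.card : ℚ) /
                lam.parts.toFinset.prod fun a => (Nat.factorial (lam.parts.count a) : ℚ))) *
            esymmPart σ ℚ lam := by
  rw [psum_eq_sum_psumEsymmCoeff_mul_esymmPart σ hn, mul_sum]
  refine sum_congr rfl fun p _ => ?_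
  have hp : p.parts ≠ 0 := fun h => by
    have hsum := p.parts_sum
    rw [h, Multiset.sum_zero] at hsum
    omega
  rw [← mul_assoc, ← map_mul, psumEsymmCoeff_eq_of_ne_zero hp, p.parts_sum]

open MvPolynomial in
/-- in the ring of symmetric functions (equivalently, in every finite number of
variables, for all n ≥ 1), p_n = (−1)^n · n · Σ_{λ ⊢ n} ((−1)^m / m) · (m choose r_1(λ), r_2(λ), …) · e_λ,
where m = #parts(λ) and the multinomial coefficient is m!/(Π_a r_a(λ)!). -/
theorem psum_eq_sum_partitions_esymm (σ : Type*) [Fintype σ] [DecidableEq σ] (n : ℕ)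
    (hn : 1 ≤ n) :
    psum σ ℚ n =
      C ((-1 : ℚ) ^ n * (n : ℚ)) *
        ∑ lam : n.Partition,
          C ((-1 : ℚ) ^ lam.parts.card / (lam.parts.card : ℚ) *
              ((Nat.factorial lam.parts.card : ℚ) /
                lam.parts.toFinset.prod fun a => (Nat.factorial (lam.parts.count a) : ℚ))) *
            esymmPart σ ℚ lam :=
  psum_eq_sum_partitions_esymm_general σ n hn
end

section
/- For nonnegative integers r_1, r_2, … (almost all zero) with m = Σ_a r_a and n = Σ_a a·r_a ≥ 1, the rational number (n/m)·(m choose r_1, r_2, …) is an integer. -/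
/-! Writing `m = ∑ₐ rₐ` and `n = ∑ₐ a·rₐ`, it suffices that `m ∣ rₐ · multinomial(r)` for every
`a`. Splitting off the block `a`, `multinomial(r) = (m choose rₐ) · multinomial(r without a)`,
and `k · (m choose k) = m · (m - 1 choose k - 1)`. -/

open Finset

theorem Nat.dvd_mul_choose (n k : ℕ) : n ∣ k * n.choose k := by
  rcases k with _ | k
  · simp
  rcases n with _ | n
  · simp
  exact ⟨n.choose k, by rw [mul_comm, ← Nat.add_one_mul_choose_eq]⟩

theorem Nat.sum_dvd_mul_multinomial {α : Type*} [DecidableEq α] {s : Finset α} {a : α}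
    (ha : a ∈ s) (f : α → ℕ) : (∑ i ∈ s, f i) ∣ f a * Nat.multinomial s f := by
  rw [← insert_erase ha, Nat.multinomial_insert (notMem_erase a s), sum_insert (notMem_erase a s),
    ← mul_assoc]
  exact dvd_mul_of_dvd_left (Nat.dvd_mul_choose _ _) _

theorem weight_div_card_mul_multinomial_int_general (r : ℕ →₀ ℕ) :
    (r.sum fun _ k => k) ∣ (r.sum fun a k => a * k) * Nat.multinomial r.support r := by
  rw [Finsupp.sum, Finsupp.sum, sum_mul]
  refine dvd_sum fun a ha => ?_
  rw [mul_assoc]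
  exact dvd_mul_of_dvd_right (Nat.sum_dvd_mul_multinomial ha r) a

/-- for finitely supported nonnegative integers r : ℕ →₀ ℕ with m = Σ_a r_a and
n = Σ_a a·r_a ≥ 1, the rational number (n/m)·(m choose r_1, r_2, …) is an integer, i.e.
m divides n · multinomial(r). -/
theorem weight_div_card_mul_multinomial_int (r : ℕ →₀ ℕ)
    (hn : 1 ≤ r.sum fun a k => a * k) :
    (r.sum fun _ k => k) ∣ (r.sum fun a k => a * k) * Nat.multinomial r.support r :=
  weight_div_card_mul_multinomial_int_general r
end

section
/- Let p be a prime, A a torsion-free ℤ_(p)-algebra, 𝔞 ⊆ A a divided-power ideal, and P, Q monic polynomials in A[X]. Fix N ≥ 1. If e_n(P) ≡ e_n(Q) mod 𝔞 for all 1 ≤ n ≤ N, then p_N(P) ≡ p_N(Q) mod N·𝔞. Here e_n(P) is (−1)^n times the coefficient of X^{deg P − n} in P (and 0 for n > deg P), and p_N(P) is the N-th power-sum of the roots of P, expressed as the universal integer polynomial in the e_n via Newton's identities. -/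
/-- `esymmOfPoly P n` is the n-th elementary symmetric function of the roots of a monic
polynomial P: (−1)^n times the coefficient of X^{deg P − n}, and 0 for n > deg P. -/
def esymmOfPoly {A : Type*} [CommRing A] (P : Polynomial A) (n : ℕ) : A :=
  if n ≤ P.natDegree then (-1 : A) ^ n * P.coeff (P.natDegree - n) else 0

/-- `newtonPower e n` is the n-th power sum expressed via Newton's identities
p_n = (−1)^{n−1} n e_n + Σ_{i=1}^{n−1} (−1)^{i−1} e_i p_{n−i}
as the universal integer polynomial in the elementary symmetric functions e. -/
def newtonPower {A : Type*} [CommRing A] (e : ℕ → A) : ℕ → A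
  | 0 => 0
  | n + 1 => (-1 : A) ^ n * (n + 1 : ℕ) * e (n + 1) +
      ∑ i ∈ Finset.range n, (-1 : A) ^ i * e (i + 1) * newtonPower e (n - i)
  decreasing_by exact Nat.lt_succ_of_le (Nat.sub_le n i)


/-!
With `E = 1 - e₁X + e₂X² - ⋯`, Newton's identities say that the power sums are the coefficients
of `-X E'/E`. Factor `E ≡ ∏_{d ≤ N} (1 - x_d X^d) mod X^{N+1}`; the Witt coordinates `x_d` are
integral polynomials in the `e_n`, so `x_d(P) ≡ x_d(Q) mod 𝔞`, and the logarithmic derivative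
turns the product into `p_N = ∑_{d ∣ N} d x_d^{N/d}`. For a divided-power ideal,
`u ≡ v mod 𝔞` gives `u^{p^j} ≡ v^{p^j} mod p^j 𝔞`, so every term `d x_d^{N/d}` is determined
mod `p^{v_p(N)} 𝔞`, which is `N 𝔞` because the prime-to-`p` part of `N` is a unit.
-/

open PowerSeries Finset

section

variable {A : Type*} [CommRing A]

/-- For `E = ∏ (1 - αᵢ X)` this is `∑ₙ (∑ᵢ αᵢ ^ n) Xⁿ`. -/
noncomputable def psumSeries (E : A⟦X⟧) : A⟦X⟧ := -(X * d⁄dX A E) * invOfUnit E 1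

theorem coeff_X_mul_derivative (f : A⟦X⟧) (n : ℕ) : coeff n (X * d⁄dX A f) = n * coeff n f := by
  cases n with
  | zero => simp
  | succ n => rw [coeff_succ_X_mul, coeff_derivative]; push_cast; ring

theorem coeff_mul_one_sub_C_mul_X_pow (g : A⟦X⟧) (x : A) (d n : ℕ) :
    coeff n (g * (1 - C x * X ^ d)) = coeff n g - if d ≤ n then x * coeff (n - d) g else 0 := by
  rw [mul_sub, mul_one, map_sub, mul_left_comm, coeff_C_mul, coeff_mul_X_pow']
  split_ifs <;> simp

theorem psumSeries_mul_self {E : A⟦X⟧} (hE : constantCoeff E = 1) :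
    psumSeries E * E = -(X * d⁄dX A E) := by
  rw [psumSeries, mul_assoc, mul_comm (invOfUnit E 1), mul_invOfUnit E 1 (by simp [hE]), mul_one]

theorem psumSeries_eq_of_mul_eq {E S : A⟦X⟧} (hE : constantCoeff E = 1)
    (h : S * E = -(X * d⁄dX A E)) : psumSeries E = S :=
  (isUnit_iff_constantCoeff (φ := E)).mpr (hE ▸ isUnit_one) |>.mul_right_cancel
    (by rw [psumSeries_mul_self hE, h])

theorem psumSeries_mul {E F : A⟦X⟧} (hE : constantCoeff E = 1) (hF : constantCoeff F = 1) :
    psumSeries (E * F) = psumSeries E + psumSeries F :=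
  psumSeries_eq_of_mul_eq (by simp [hE, hF]) <| by
    rw [Derivation.leibniz, smul_eq_mul, smul_eq_mul]
    linear_combination F * psumSeries_mul_self hE + E * psumSeries_mul_self hF

theorem psumSeries_one : psumSeries (1 : A⟦X⟧) = 0 :=
  psumSeries_eq_of_mul_eq (map_one _) (by simp)

theorem coeff_zero_psumSeries (E : A⟦X⟧) : coeff 0 (psumSeries E) = 0 := by
  simp [psumSeries]

theorem coeff_succ_psumSeries {E : A⟦X⟧} (hE : constantCoeff E = 1) (n : ℕ) :
    coeff (n + 1) (psumSeries E) = -((n + 1 : ℕ) * coeff (n + 1) E) -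
      ∑ i ∈ range n, coeff (i + 1) E * coeff (n - i) (psumSeries E) := by
  have h := congrArg (coeff (n + 1)) (psumSeries_mul_self hE)
  rw [coeff_mul, Finset.Nat.sum_antidiagonal_succ', ← Finset.Nat.sum_antidiagonal_swap] at h
  simp only [Prod.fst_swap, Prod.snd_swap, mul_comm (coeff _ (psumSeries E))] at h
  rw [Finset.Nat.sum_antidiagonal_eq_sum_range_succ (fun j i => coeff (j + 1) E * coeff i _),
    sum_range_succ, Nat.sub_self, coeff_zero_psumSeries, coeff_zero_eq_constantCoeff_apply, hE,
    map_neg, coeff_X_mul_derivative] at h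
  linear_combination h

theorem coeff_psumSeries_eq_newtonPower {E : A⟦X⟧} (hE : constantCoeff E = 1) {e : ℕ → A}
    {n : ℕ} (he : ∀ j, 1 ≤ j → j ≤ n → coeff j E = (-1) ^ j * e j) :
    coeff n (psumSeries E) = newtonPower e n := by
  induction n using Nat.strong_induction_on with
  | _ n ih =>
    rcases n with _ | n
    · rw [coeff_zero_psumSeries, newtonPower]
    rw [coeff_succ_psumSeries hE, newtonPower, he (n + 1) (by omega) le_rfl, pow_succ]
    have hsum : ∀ i ∈ range n, coeff (i + 1) E * coeff (n - i) (psumSeries E) =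
        -((-1) ^ i * e (i + 1) * newtonPower e (n - i)) := by
      intro i hi
      have hi := mem_range.mp hi
      rw [he (i + 1) (by omega) (by omega),
        ih (n - i) (by omega) fun j hj₁ hj₂ => he j hj₁ (by omega), pow_succ]
      ring
    rw [sum_congr rfl hsum, sum_neg_distrib]
    ring

theorem coeff_psumSeries_one_sub_C_mul_X_pow (x : A) {d : ℕ} (hd : d ≠ 0) (n : ℕ) :
    coeff n (psumSeries (1 - C x * X ^ d)) = if d ∈ n.divisors then d * x ^ (n / d) else 0 := by
  suffices psumSeries (1 - C x * X ^ d) =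
      mk fun n => if d ∈ n.divisors then (d : A) * x ^ (n / d) else 0 by
    rw [this, coeff_mk]
  refine psumSeries_eq_of_mul_eq (by simp [hd]) ?_
  ext n
  rw [coeff_mul_one_sub_C_mul_X_pow, map_neg, coeff_X_mul_derivative, map_sub, coeff_one,
    coeff_C_mul_X_pow, coeff_mk, coeff_mk]
  simp only [Nat.mem_divisors]
  rcases lt_or_ge n d with hnd | hdn
  · rcases n with _ | n
    · simp
    · have : ¬ d ∣ n + 1 := fun h => (Nat.le_of_dvd n.succ_pos h).not_gt hnd
      simp [this, hnd.ne, hnd.not_ge]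
  · obtain ⟨k, rfl⟩ := Nat.exists_eq_add_of_le hdn
    rw [if_pos (Nat.le_add_right d k), add_tsub_cancel_left, if_neg (by omega : d + k ≠ 0)]
    rcases eq_or_ne k 0 with rfl | hk
    · simp [hd, Nat.div_self (Nat.pos_of_ne_zero hd)]
    have hdiv : (d + k) / d = k / d + 1 := by
      rw [add_comm, Nat.add_div_right _ (Nat.pos_of_ne_zero hd)]
    rw [if_neg (by omega : d + k ≠ d)]
    simp only [Nat.dvd_add_self_left, hdiv]
    by_cases hdk : d ∣ k
    · rw [if_pos ⟨hdk, by omega⟩, if_pos ⟨hdk, hk⟩]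
      ring
    · rw [if_neg fun h => hdk h.1, if_neg fun h => hdk h.1]
      ring

theorem coeff_psumSeries_eq_zero_of_X_pow_dvd_sub_one {H : A⟦X⟧} {N : ℕ}
    (h : X ^ (N + 1) ∣ H - 1) {n : ℕ} (hn : n ≤ N) : coeff n (psumSeries H) = 0 := by
  have hXH : X ^ (N + 1) ∣ X * d⁄dX A H := by
    have : X * d⁄dX A H = X * d⁄dX A (H - 1) := by simp
    refine X_pow_dvd_iff.mpr fun m hm => ?_
    rw [this, coeff_X_mul_derivative, X_pow_dvd_iff.mp h m hm, mul_zero]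
  exact X_pow_dvd_iff.mp ((dvd_neg.mpr hXH).mul_right _) n (Nat.lt_succ_of_le hn)

theorem coeff_psumSeries_eq_of_X_pow_dvd_sub {E F : A⟦X⟧} (hF : constantCoeff F = 1) {N : ℕ}
    (h : X ^ (N + 1) ∣ E - F) {n : ℕ} (hn : n ≤ N) :
    coeff n (psumSeries E) = coeff n (psumSeries F) := by
  set H := E * invOfUnit F 1
  have hFinv : F * invOfUnit F 1 = 1 := mul_invOfUnit F 1 (by simp [hF])
  have hFH : F * H = E := by rw [mul_left_comm, hFinv, mul_one]
  have hH : X ^ (N + 1) ∣ H - 1 := by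
    rw [show H - 1 = (E - F) * invOfUnit F 1 by rw [sub_mul, hFinv]]
    exact h.mul_right _
  have hH1 : constantCoeff H = 1 := by
    simpa [sub_eq_zero] using X_pow_dvd_iff.mp hH 0 N.succ_pos
  rw [← hFH, psumSeries_mul hF hH1, map_add,
    coeff_psumSeries_eq_zero_of_X_pow_dvd_sub_one hH hn, add_zero]

noncomputable def wittProd (E : A⟦X⟧) : ℕ → A⟦X⟧
  | 0 => 1
  | n + 1 => wittProd E n * (1 - C (coeff (n + 1) (wittProd E n - E)) * X ^ (n + 1))

noncomputable def wittCoord (E : A⟦X⟧) (n : ℕ) : A := coeff n (wittProd E (n - 1) - E)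

theorem wittProd_succ (E : A⟦X⟧) (n : ℕ) :
    wittProd E (n + 1) = wittProd E n * (1 - C (wittCoord E (n + 1)) * X ^ (n + 1)) := by
  rw [wittProd, wittCoord, Nat.add_sub_cancel]

theorem constantCoeff_wittProd (E : A⟦X⟧) (n : ℕ) : constantCoeff (wittProd E n) = 1 := by
  induction n with
  | zero => simp [wittProd]
  | succ n ih => simp [wittProd_succ, ih]

theorem X_pow_dvd_sub_wittProd {E : A⟦X⟧} (hE : constantCoeff E = 1) (n : ℕ) :
    X ^ (n + 1) ∣ E - wittProd E n := by
  induction n with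
  | zero => simp [wittProd, X_dvd_iff, hE]
  | succ n ih =>
    refine X_pow_dvd_iff.mpr fun m hm => ?_
    rw [wittProd_succ, map_sub, coeff_mul_one_sub_C_mul_X_pow]
    rcases lt_or_eq_of_le (Nat.le_of_lt_succ hm) with hm | rfl
    · rw [if_neg (by omega), sub_zero, ← map_sub, X_pow_dvd_iff.mp ih m hm]
    · rw [if_pos le_rfl, Nat.sub_self, coeff_zero_eq_constantCoeff_apply, constantCoeff_wittProd,
        wittCoord, Nat.add_sub_cancel, map_sub]
      ring

theorem coeff_psumSeries_wittProd (E : A⟦X⟧) (N n : ℕ) :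
    coeff n (psumSeries (wittProd E N)) =
      ∑ d ∈ Icc 1 N, if d ∈ n.divisors then (d : A) * wittCoord E d ^ (n / d) else 0 := by
  induction N with
  | zero => simp [wittProd, psumSeries_one]
  | succ N ih =>
    rw [wittProd_succ, psumSeries_mul (constantCoeff_wittProd E N) (by simp), map_add, ih,
      coeff_psumSeries_one_sub_C_mul_X_pow _ N.succ_ne_zero, sum_Icc_succ_top (by omega)]

theorem coeff_psumSeries_eq_sum_divisors {E : A⟦X⟧} (hE : constantCoeff E = 1) (n : ℕ) :
    coeff n (psumSeries E) = ∑ d ∈ n.divisors, (d : A) * wittCoord E d ^ (n / d) := by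
  classical
  rw [coeff_psumSeries_eq_of_X_pow_dvd_sub (constantCoeff_wittProd E n)
      (X_pow_dvd_sub_wittProd hE n) le_rfl, coeff_psumSeries_wittProd, sum_ite_mem,
    inter_eq_right.mpr fun d hd => mem_Icc.mpr ⟨Nat.pos_of_mem_divisors hd, Nat.divisor_le hd⟩]

theorem wittProd_map {B : Type*} [CommRing B] (f : A →+* B) (E : A⟦X⟧) (n : ℕ) :
    wittProd (map f E) n = map f (wittProd E n) := by
  induction n with
  | zero => simp [wittProd]
  | succ n ih =>
    rw [wittProd, wittProd, ih, ← map_sub, coeff_map]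
    simp

theorem wittCoord_map {B : Type*} [CommRing B] (f : A →+* B) (E : A⟦X⟧) (n : ℕ) :
    wittCoord (map f E) n = f (wittCoord E n) := by
  rw [wittCoord, wittCoord, wittProd_map, ← map_sub, coeff_map]

theorem wittCoord_sub_mem {I : Ideal A} {E F : A⟦X⟧}
    (h : map (Ideal.Quotient.mk I) E = map (Ideal.Quotient.mk I) F) (n : ℕ) :
    wittCoord E n - wittCoord F n ∈ I :=
  Ideal.Quotient.eq.mp (by rw [← wittCoord_map, ← wittCoord_map, h])

section DividedPowers

variable {p : ℕ} {I : Ideal A}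

theorem pow_prime_sub_pow_prime_mem (hp : p.Prime) (hdp : ∀ a ∈ I, ∃ b ∈ I, a ^ p = (p : A) * b)
    {u v : A} {j : ℕ} (h : u - v ∈ Ideal.span {(p : A) ^ j} * I) :
    u ^ p - v ^ p ∈ Ideal.span {(p : A) ^ (j + 1)} * I := by
  obtain ⟨c, hc, huv⟩ := Ideal.mem_span_singleton_mul.mp h
  obtain ⟨b, hb, hcb⟩ := hdp c hc
  obtain ⟨r, hr⟩ := exists_add_pow_prime_eq hp v ((p : A) ^ j * c)
  obtain ⟨q, rfl⟩ : ∃ q, p = q + 1 := ⟨p - 1, (Nat.sub_add_cancel hp.one_le).symm⟩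
  refine Ideal.mem_span_singleton_mul.mpr
    ⟨(((q + 1 : ℕ) : A) ^ j) ^ q * b + v * c * r, I.add_mem (I.mul_mem_left _ hb)
      (I.mul_mem_right _ (I.mul_mem_left _ hc)), ?_⟩
  rw [eq_add_of_sub_eq' huv.symm, hr, mul_pow, hcb]
  ring

theorem pow_prime_pow_sub_pow_prime_pow_mem (hp : p.Prime)
    (hdp : ∀ a ∈ I, ∃ b ∈ I, a ^ p = (p : A) * b) {u v : A} (h : u - v ∈ I) (j : ℕ) :
    u ^ p ^ j - v ^ p ^ j ∈ Ideal.span {(p : A) ^ j} * I := by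
  induction j with
  | zero => simpa using h
  | succ j ih => simpa only [pow_succ, pow_mul] using pow_prime_sub_pow_prime_mem hp hdp ih

theorem pow_sub_pow_mem (hp : p.Prime) (hdp : ∀ a ∈ I, ∃ b ∈ I, a ^ p = (p : A) * b)
    {u v : A} (h : u - v ∈ I) (n : ℕ) :
    u ^ n - v ^ n ∈ Ideal.span {(p : A) ^ n.factorization p} * I := by
  obtain ⟨m, hm⟩ := Nat.ordProj_dvd n p
  obtain ⟨s, hs⟩ := sub_dvd_pow_sub_pow (u ^ p ^ n.factorization p) (v ^ p ^ n.factorization p) m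
  rw [← pow_mul, ← pow_mul, ← hm] at hs
  rw [hs]
  exact Ideal.mul_mem_right _ _ (pow_prime_pow_sub_pow_prime_pow_mem hp hdp h _)

theorem natCast_mul_pow_sub_mem (hp : p.Prime) (hdp : ∀ a ∈ I, ∃ b ∈ I, a ^ p = (p : A) * b)
    {x y : A} (h : x - y ∈ I) {d N : ℕ} (hd : d ∣ N) (hN : N ≠ 0) :
    (d : A) * x ^ (N / d) - d * y ^ (N / d) ∈ Ideal.span {(p : A) ^ N.factorization p} * I := by
  have hfac : d.factorization p + (N / d).factorization p = N.factorization p := by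
    have := (Nat.factorization_le_iff_dvd (ne_zero_of_dvd_ne_zero hN hd) hN).2 hd p
    rw [Nat.factorization_div hd, Finsupp.tsub_apply]
    omega
  have hdcast : (d : A) = (p : A) ^ d.factorization p * (d / p ^ d.factorization p : ℕ) := by
    rw [← Nat.cast_pow, ← Nat.cast_mul, Nat.ordProj_mul_ordCompl_eq_self]
  obtain ⟨z, hz, hxy⟩ := Ideal.mem_span_singleton_mul.mp (pow_sub_pow_mem hp hdp h (N / d))
  refine Ideal.mem_span_singleton_mul.mpr
    ⟨(d / p ^ d.factorization p : ℕ) * z, I.mul_mem_left _ hz, ?_⟩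
  rw [← mul_sub, ← hxy, ← hfac, pow_add, hdcast]
  ring

theorem isUnit_natCast_of_not_dvd (hinv : ∀ q : ℕ, q.Prime → q ≠ p → IsUnit (q : A)) {m : ℕ}
    (hm : ¬ p ∣ m) : IsUnit (m : A) := by
  induction m using Nat.recOnMul with
  | zero => exact absurd (dvd_zero p) hm
  | one => simp
  | prime q hq => exact hinv q hq (by rintro rfl; exact hm dvd_rfl)
  | mul a b iha ihb =>
    rw [Nat.cast_mul]
    exact (iha fun h => hm (h.mul_right b)).mul (ihb fun h => hm (h.mul_left a))

theorem span_natCast_eq_span_pow_factorization (hp : p.Prime)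
    (hinv : ∀ q : ℕ, q.Prime → q ≠ p → IsUnit (q : A)) {N : ℕ} (hN : N ≠ 0) :
    Ideal.span {(N : A)} = Ideal.span {(p : A) ^ N.factorization p} := by
  rw [← Ideal.span_singleton_mul_right_unit
    (isUnit_natCast_of_not_dvd hinv (Nat.not_dvd_ordCompl hp hN)) ((p : A) ^ N.factorization p),
    ← Nat.cast_pow, ← Nat.cast_mul, Nat.ordProj_mul_ordCompl_eq_self]

theorem coeff_psumSeries_sub_mem (hp : p.Prime)
    (hinv : ∀ q : ℕ, q.Prime → q ≠ p → IsUnit (q : A))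
    (hdp : ∀ a ∈ I, ∃ b ∈ I, a ^ p = (p : A) * b) {E F : A⟦X⟧} (hE : constantCoeff E = 1)
    (hF : constantCoeff F = 1) (h : map (Ideal.Quotient.mk I) E = map (Ideal.Quotient.mk I) F)
    {N : ℕ} (hN : N ≠ 0) :
    coeff N (psumSeries E) - coeff N (psumSeries F) ∈ Ideal.span {(N : A)} * I := by
  rw [coeff_psumSeries_eq_sum_divisors hE, coeff_psumSeries_eq_sum_divisors hF,
    ← sum_sub_distrib, span_natCast_eq_span_pow_factorization hp hinv hN]
  exact Ideal.sum_mem _ fun d hd =>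
    natCast_mul_pow_sub_mem hp hdp (wittCoord_sub_mem h d) (Nat.dvd_of_mem_divisors hd) hN

end DividedPowers

/-- Truncation at `N` turns congruences of `e₁, …, e_N` into a congruence of series. -/
noncomputable def esymmSeries (e : ℕ → A) (N : ℕ) : A⟦X⟧ :=
  mk fun n => if n = 0 then 1 else if n ≤ N then (-1) ^ n * e n else 0

theorem constantCoeff_esymmSeries (e : ℕ → A) (N : ℕ) : constantCoeff (esymmSeries e N) = 1 := by
  simp [esymmSeries, ← coeff_zero_eq_constantCoeff_apply]

theorem coeff_psumSeries_esymmSeries (e : ℕ → A) {N n : ℕ} (hn : n ≤ N) :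
    coeff n (psumSeries (esymmSeries e N)) = newtonPower e n :=
  coeff_psumSeries_eq_newtonPower (constantCoeff_esymmSeries e N) fun j hj₁ hj₂ => by
    rw [esymmSeries, coeff_mk, if_neg (by omega), if_pos (hj₂.trans hn)]

theorem map_esymmSeries_eq {I : Ideal A} {e f : ℕ → A} {N : ℕ}
    (h : ∀ n, 1 ≤ n → n ≤ N → e n - f n ∈ I) :
    map (Ideal.Quotient.mk I) (esymmSeries e N) = map (Ideal.Quotient.mk I) (esymmSeries f N) := by
  ext n
  simp only [esymmSeries, coeff_map, coeff_mk]
  split_ifs with h₀ hN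
  · rfl
  · exact Ideal.Quotient.eq.mpr (by rw [← mul_sub]; exact I.mul_mem_left _ (h n (by omega) hN))
  · rfl

end

theorem esymm_congr_imp_psum_deep_congr_general {A : Type*} [CommRing A] (p : ℕ) (hp : p.Prime)
    (hinv : ∀ q : ℕ, q.Prime → q ≠ p → IsUnit (q : A))
    (I : Ideal A) (hdp : ∀ a ∈ I, ∃ b ∈ I, a ^ p = (p : A) * b)
    (P Q : Polynomial A) (N : ℕ) (hN : 1 ≤ N)
    (h : ∀ n : ℕ, 1 ≤ n → n ≤ N → esymmOfPoly P n - esymmOfPoly Q n ∈ I) :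
    ∃ b ∈ I, newtonPower (esymmOfPoly P) N - newtonPower (esymmOfPoly Q) N = (N : A) * b := by
  have hmem := coeff_psumSeries_sub_mem hp hinv hdp (constantCoeff_esymmSeries _ N)
    (constantCoeff_esymmSeries _ N) (map_esymmSeries_eq h) (by omega : N ≠ 0)
  rw [coeff_psumSeries_esymmSeries _ le_rfl, coeff_psumSeries_esymmSeries _ le_rfl] at hmem
  obtain ⟨b, hb, hdiff⟩ := Ideal.mem_span_singleton_mul.mp hmem
  exact ⟨b, hb, hdiff.symm⟩

/-- Let A be a torsion-free ℤ_(p)-algebra, 𝔞 a divided-power ideal, and P, Q monic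
polynomials in A[X].  If e_n(P) ≡ e_n(Q) mod 𝔞 for all 1 ≤ n ≤ N, then
p_N(P) ≡ p_N(Q) mod N·𝔞. -/
theorem esymm_congr_imp_psum_deep_congr {A : Type*} [CommRing A] (p : ℕ) (hp : p.Prime)
    (htf : ∀ (n : ℤ) (a : A), n ≠ 0 → n • a = 0 → a = 0)
    (hinv : ∀ q : ℕ, q.Prime → q ≠ p → IsUnit (q : A))
    (I : Ideal A) (hdp : ∀ a ∈ I, ∃ b ∈ I, a ^ p = (p : A) * b)
    (P Q : Polynomial A) (hP : P.Monic) (hQ : Q.Monic) (N : ℕ) (hN : 1 ≤ N)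
    (h : ∀ n : ℕ, 1 ≤ n → n ≤ N → esymmOfPoly P n - esymmOfPoly Q n ∈ I) :
    ∃ b ∈ I, newtonPower (esymmOfPoly P) N - newtonPower (esymmOfPoly Q) N = (N : A) * b :=
  esymm_congr_imp_psum_deep_congr_general p hp hinv I hdp P Q N hN h
end
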